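/- arXiv:1807.00030 — 2 statements merged into one kernel-verified Lean document; each statement's English description precedes it below -/
import Mathlib

section
/- The second dyadic inference rule is sound: if a rooted binary tree displays pq|o and qo|o', then it displays both pq|o' and po|o'. -/
inductive BTree (α : Type) : Type
  | leaf : α → BTree α
  | node : BTree α → BTree α → BTree α

namespace BTree

variable {α : Type}

def leavesList : BTree α → List α
  | .leaf a => [a]
  | .node l r => leavesList l ++ leavesList r

/-- `a` is a leaf label of `T`. -/
def IsLeaf (T : BTree α) (a : α) : Prop := a ∈ T.leavesList

/-- A valid rooted binary tree has pairwise distinct leaf labels. -/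
def Valid (T : BTree α) : Prop := T.leavesList.Nodup

/-- The root-to-leaf path (as a list of left/right choices) of the leaf labeled `x`, if any. -/
def find [DecidableEq α] : BTree α → α → Option (List Bool)
  | .leaf a, x => if x = a then some [] else none
  | .node l r, x =>
    match find l x with
    | some p => some (false :: p)
    | none => (find r x).map (fun p => true :: p)

def commonPrefix : List Bool → List Bool → List Bool
  | a :: as, b :: bs => if a = b then a :: commonPrefix as bs else []
  | _, _ => []

/-- The (path to the) lowest common ancestor of leaves `p` and `q` in `T`. -/
def lcaPath [DecidableEq α] (T : BTree α) (p q : α) : Option (List Bool) :=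
  match T.find p, T.find q with
  | some a, some b => some (commonPrefix a b)
  | _, _ => none

/-- The node at path `s` is a proper descendant of the node at path `t`. -/
def ProperDesc (s t : List Bool) : Prop := t <+: s ∧ t ≠ s

/-- `T` displays the rooted triple `pq|o`: the leaves are distinct and
`lca(p,q)` is a proper descendant of `lca(p,o) = lca(q,o)`. -/
def Displays [DecidableEq α] (T : BTree α) (p q o : α) : Prop :=
  p ≠ q ∧ p ≠ o ∧ q ≠ o ∧
  ∃ u v, T.lcaPath p q = some u ∧ T.lcaPath p o = some v ∧
    T.lcaPath q o = some v ∧ ProperDesc u v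

end BTree

section Triples

variable {α : Type} [DecidableEq α]

/-- A rooted triple `pq|o`: an unordered pair of leaves together with a third leaf. -/
abbrev RTriple (α : Type) := Sym2 α × α

/-- `T` displays the rooted triple `t`. -/
def DisplaysT (T : BTree α) (t : RTriple α) : Prop :=
  ∃ p q, t.1 = s(p, q) ∧ BTree.Displays T p q t.2

def DisplaysAll (T : BTree α) (R : Set (RTriple α)) : Prop := ∀ t ∈ R, DisplaysT T t

/-- A triple set is consistent if some (valid) rooted binary tree displays all its triples. -/
def Consistent (R : Set (RTriple α)) : Prop := ∃ T : BTree α, T.Valid ∧ DisplaysAll T R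

/-- Closure of a consistent triple set: the triples displayed by every tree displaying `R`. -/
def clC (R : Set (RTriple α)) : Set (RTriple α) :=
  {t | ∀ T : BTree α, T.Valid → DisplaysAll T R → DisplaysT T t}

/-- Closure of an arbitrary (possibly inconsistent) triple set:
triples entailed by some consistent subset. -/
def cl (R : Set (RTriple α)) : Set (RTriple α) :=
  {t | ∃ R' ⊆ R, Consistent R' ∧ t ∈ clC R'}

end Triples

namespace BTree

lemma commonPrefix_comm : ∀ a b : List Bool, commonPrefix a b = commonPrefix b a
  | [], [] => rfl
  | [], _ :: _ => rfl
  | _ :: _, [] => rfl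
  | x :: as, y :: bs => by
    simp only [commonPrefix]
    by_cases h : x = y
    · subst h
      simp [commonPrefix_comm as bs]
    · simp [h, Ne.symm h]

lemma commonPrefix_key : ∀ a b c : List Bool,
    (commonPrefix b c).length < (commonPrefix a b).length →
    commonPrefix a c = commonPrefix b c
  | [], b, c => by simp [commonPrefix]
  | _ :: _, [], c => by simp [commonPrefix]
  | x :: as, y :: bs, [] => by simp [commonPrefix]
  | x :: as, y :: bs, z :: cs => by
    by_cases hxy : x = y
    · subst hxy
      by_cases hyz : x = z
      · subst hyz
        have e1 : commonPrefix (x :: as) (x :: bs) = x :: commonPrefix as bs := by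
          simp [commonPrefix]
        have e2 : commonPrefix (x :: bs) (x :: cs) = x :: commonPrefix bs cs := by
          simp [commonPrefix]
        have e3 : commonPrefix (x :: as) (x :: cs) = x :: commonPrefix as cs := by
          simp [commonPrefix]
        rw [e1, e2, e3]
        simp only [List.length_cons, Nat.succ_lt_succ_iff]
        intro h
        rw [commonPrefix_key as bs cs h]
      · simp [commonPrefix, hyz]
    · simp [commonPrefix, hxy]

lemma commonPrefix_prefix : ∀ a b : List Bool, commonPrefix a b <+: a
  | [], _ => by simp [commonPrefix]
  | _ :: _, [] => by simp [commonPrefix]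
  | x :: as, y :: bs => by
    simp only [commonPrefix]
    by_cases h : x = y
    · simpa [h] using commonPrefix_prefix as bs
    · simp [h]

lemma lcaPath_elim [DecidableEq α] {T : BTree α} {x y : α} {w : List Bool}
    (h : T.lcaPath x y = some w) :
    ∃ a b, T.find x = some a ∧ T.find y = some b ∧ w = commonPrefix a b := by
  unfold lcaPath at h
  rcases hx : T.find x with _ | a <;> rcases hy : T.find y with _ | b <;>
    simp [hx, hy] at h
  exact ⟨a, b, rfl, rfl, h.symm⟩

lemma strict_prefix_length {u v : List Bool} (h : u <+: v) (hne : u ≠ v) :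
    u.length < v.length := by
  rcases Nat.lt_or_ge u.length v.length with h' | h'
  · exact h'
  · exact absurd (List.IsPrefix.eq_of_length_le h h') hne

end BTree

/-- Second dyadic inference rule: {pq|o, qo|o'} ⊢ {pq|o', po|o'}. -/
theorem stmt4 {α : Type} [DecidableEq α] (T : BTree α) (hT : T.Valid)
    (p q o o' : α)
    (h1 : p ≠ q) (h2 : p ≠ o) (h3 : p ≠ o') (h4 : q ≠ o) (h5 : q ≠ o') (h6 : o ≠ o')
    (hA : BTree.Displays T p q o) (hB : BTree.Displays T q o o') :
    BTree.Displays T p q o' ∧ BTree.Displays T p o o' := by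
  obtain ⟨-, -, -, u, v, hpq, hpo, hqo, hdescA⟩ := hA
  obtain ⟨-, -, -, u', v', hqo', hqo'2, hoo', hdescB⟩ := hB
  have huv : u' = v := by
    rw [hqo] at hqo'
    exact (Option.some_inj.mp hqo').symm
  subst huv
  obtain ⟨fp, fq, hfp, hfq, hu⟩ := BTree.lcaPath_elim hpq
  obtain ⟨fq', fo', hfq', hfo', hv'eq⟩ := BTree.lcaPath_elim hqo'2
  rw [hfq] at hfq'
  obtain rfl : fq = fq' := Option.some_inj.mp hfq'
  have hlen1 : v'.length < u'.length :=
    BTree.strict_prefix_length hdescB.1 hdescB.2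
  have hlen2 : u'.length ≤ u.length := List.IsPrefix.length_le hdescA.1
  have hkey : BTree.commonPrefix fp fo' = v' := by
    have hlt : (BTree.commonPrefix fq fo').length < (BTree.commonPrefix fp fq).length := by
      rw [← hv'eq, ← hu]; omega
    rw [BTree.commonPrefix_key fp fq fo' hlt, ← hv'eq]
  have hpo' : T.lcaPath p o' = some v' := by
    unfold BTree.lcaPath
    rw [hfp, hfo']
    simp [hkey]
  have hdesc1 : BTree.ProperDesc u v' := by
    refine ⟨hdescB.1.trans hdescA.1, ?_⟩
    intro h; subst h; omega
  exact ⟨⟨h1, h3, h5, u, v', hpq, hpo', hqo'2, hdesc1⟩,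
    ⟨h2, h3, h6, u', v', hpo, hpo', hoo', hdescB⟩⟩
end

section
/- Generalized second dyadic rule: if a rooted binary tree displays the triple u_{k-1}|o and the triple u_k|o', where u_{k-1}, u_k are 2-element leaf sets with |u_{k-1} ∩ u_k| = 1 and o ∈ u_k \ u_{k-1}, then it displays u_{k-1}|o'. -/
/-- `T` displays the triple u|o for a 2-element leaf set u. -/
def DisplaysU {α : Type} [DecidableEq α] (T : BTree α) (u : Sym2 α) (o : α) : Prop :=
  ∃ p q, u = s(p, q) ∧ BTree.Displays T p q o


section Stmt14Aux

open BTree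

variable {α : Type} [DecidableEq α]

lemma cp_prefix_left : ∀ a b : List Bool, BTree.commonPrefix a b <+: a
  | [], _ => by simp [BTree.commonPrefix]
  | _ :: _, [] => by simp [BTree.commonPrefix]
  | a :: as, b :: bs => by
    by_cases h : a = b
    · subst h
      simpa [BTree.commonPrefix, List.cons_prefix_cons] using cp_prefix_left as bs
    · simp [BTree.commonPrefix, h]

lemma cp_comm : ∀ a b : List Bool, BTree.commonPrefix a b = BTree.commonPrefix b a
  | [], [] => rfl
  | [], _ :: _ => rfl
  | _ :: _, [] => rfl
  | a :: as, b :: bs => by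
    by_cases h : a = b
    · subst h; simp [BTree.commonPrefix, cp_comm as bs]
    · simp [BTree.commonPrefix, h, Ne.symm h]

lemma cp_prefix_right (a b : List Bool) : BTree.commonPrefix a b <+: b := by
  rw [cp_comm]; exact cp_prefix_left b a

lemma prefix_cp : ∀ (c a b : List Bool), c <+: a → c <+: b → c <+: BTree.commonPrefix a b
  | [], _, _, _, _ => List.nil_prefix
  | _ :: _, [], _, h1, _ => by simp at h1
  | _ :: _, _ :: _, [], _, h2 => by simp at h2
  | x :: cs, a :: as, b :: bs, h1, h2 => by
    obtain ⟨rfl, h1'⟩ := List.cons_prefix_cons.mp h1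
    obtain ⟨rfl, h2'⟩ := List.cons_prefix_cons.mp h2
    simpa [BTree.commonPrefix, List.cons_prefix_cons] using prefix_cp cs as bs h1' h2'

lemma pref_antisymm {a b : List Bool} (h1 : a <+: b) (h2 : b <+: a) : a = b :=
  h1.eq_of_length (Nat.le_antisymm h1.length_le h2.length_le)

lemma lcaPath_eq {T : BTree α} {p q : α} {u : List Bool} (h : T.lcaPath p q = some u) :
    ∃ P Q, T.find p = some P ∧ T.find q = some Q ∧ u = BTree.commonPrefix P Q := by
  cases hp : T.find p with
  | none => simp [BTree.lcaPath, hp] at h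
  | some P =>
    cases hq : T.find q with
    | none => simp [BTree.lcaPath, hp, hq] at h
    | some Q =>
      refine ⟨P, Q, rfl, rfl, ?_⟩
      simp [BTree.lcaPath, hp, hq] at h
      exact h.symm

lemma lcaPath_comm (T : BTree α) (p q : α) : T.lcaPath p q = T.lcaPath q p := by
  unfold BTree.lcaPath
  cases T.find p <;> cases T.find q <;> simp [cp_comm]

lemma displays_swap {T : BTree α} {p q o : α} (h : T.Displays p q o) : T.Displays q p o := by
  obtain ⟨hpq, hpo, hqo, u, v, hu, hv1, hv2, hd⟩ := h
  exact ⟨hpq.symm, hqo, hpo, u, v, (lcaPath_comm T q p).trans hu, hv2, hv1, hd⟩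

lemma core_dyadic {T : BTree α} {p q o o' : α}
    (h1 : T.Displays p q o) (h2 : T.Displays p o o') : T.Displays p q o' := by
  obtain ⟨hpq, hpo, hqo, u, v, hu, hv1, hv2, hvu, hvne⟩ := h1
  obtain ⟨_, hpo', hoo', v₂, w, hv₂, hw1, hw2, hwv, hwne⟩ := h2
  -- identify v₂ with v
  rw [hv1] at hv₂
  obtain rfl : v = v₂ := Option.some.inj hv₂
  obtain ⟨P, Q, hP, hQ, huPQ⟩ := lcaPath_eq hu
  obtain ⟨P1, O, hP1, hO, hvPO⟩ := lcaPath_eq hv1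
  rw [hP] at hP1; obtain rfl : P = P1 := Option.some.inj hP1
  obtain ⟨Q1, O1, hQ1, hO1, hvQO⟩ := lcaPath_eq hv2
  rw [hQ] at hQ1; obtain rfl : Q = Q1 := Option.some.inj hQ1
  rw [hO] at hO1; obtain rfl : O = O1 := Option.some.inj hO1
  obtain ⟨P2, O', hP2, hO', hwPO'⟩ := lcaPath_eq hw1
  rw [hP] at hP2; obtain rfl : P = P2 := Option.some.inj hP2
  -- basic prefix facts
  have huP : u <+: P := huPQ ▸ cp_prefix_left P Q
  have huQ : u <+: Q := huPQ ▸ cp_prefix_right P Q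
  have hvQ : v <+: Q := hvQO ▸ cp_prefix_left Q O
  have hwO' : w <+: O' := hwPO' ▸ cp_prefix_right P O'
  have hwP : w <+: P := hwPO' ▸ cp_prefix_left P O'
  have hwQ : w <+: Q := hwv.trans hvQ
  -- q ≠ o'
  have hqo' : q ≠ o' := by
    intro h
    subst h
    rw [hQ] at hO'
    obtain rfl : Q = O' := Option.some.inj hO'
    have hwu : w = u := by rw [hwPO', huPQ]
    exact hwne (pref_antisymm hwv (hwu ▸ hvu))
  -- lca(q, o') = w
  have hqo'lca : T.lcaPath q o' = some (BTree.commonPrefix Q O') := by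
    simp [BTree.lcaPath, hQ, hO']
  have hcw : BTree.commonPrefix Q O' = w := by
    have h1 : w <+: BTree.commonPrefix Q O' := prefix_cp w Q O' hwQ hwO'
    have h2 : BTree.commonPrefix Q O' <+: w := by
      rcases List.prefix_or_prefix_of_prefix (cp_prefix_left Q O') hvQ with hc | hc
      · have hcP : BTree.commonPrefix Q O' <+: P := (hc.trans hvu).trans huP
        exact hwPO' ▸ prefix_cp _ P O' hcP (cp_prefix_right Q O')
      · exfalso
        have hvO' : v <+: O' := hc.trans (cp_prefix_right Q O')
        have hvP : v <+: P := hvu.trans huP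
        have : v <+: w := hwPO' ▸ prefix_cp v P O' hvP hvO'
        exact hwne (pref_antisymm hwv this)
    exact pref_antisymm h2 h1
  rw [hcw] at hqo'lca
  refine ⟨hpq, hpo', hqo', u, w, hu, hw1, hqo'lca, hwv.trans hvu, ?_⟩
  intro h
  subst h
  exact hwne (pref_antisymm hwv hvu)

end Stmt14Aux

/-- Generalized second dyadic rule: if T displays u₁|o and u₂|o', where u₁,u₂ share
exactly one leaf and o ∈ u₂ \ u₁, then T displays u₁|o'. -/
theorem stmt14 {α : Type} [DecidableEq α] (T : BTree α) (hT : T.Valid)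
    (u₁ u₂ : Sym2 α) (o o' : α)
    (hshare : ∃! x : α, x ∈ u₁ ∧ x ∈ u₂)
    (ho : o ∈ u₂ ∧ o ∉ u₁)
    (h1 : DisplaysU T u₁ o) (h2 : DisplaysU T u₂ o') :
    DisplaysU T u₁ o' := by
  obtain ⟨p, q, hu₁, hd1⟩ := h1
  obtain ⟨x, ⟨hxu1, hxu2⟩, -⟩ := hshare
  have hxo : x ≠ o := fun h => ho.2 (h ▸ hxu1)
  have hu₂ : u₂ = s(x, o) := (Sym2.mem_and_mem_iff hxo).mp ⟨hxu2, ho.1⟩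
  obtain ⟨p', q', hu₂', hd2⟩ := h2
  rw [hu₂] at hu₂'
  have hd2' : T.Displays x o o' := by
    rcases Sym2.eq_iff.mp hu₂' with ⟨rfl, rfl⟩ | ⟨rfl, rfl⟩
    · exact hd2
    · exact displays_swap hd2
  rw [hu₁] at hxu1
  refine ⟨p, q, hu₁, ?_⟩
  rcases Sym2.mem_iff.mp hxu1 with rfl | rfl
  · exact core_dyadic hd1 hd2'
  · exact displays_swap (core_dyadic (displays_swap hd1) hd2')
end
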